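/- Let V and Q be finite-dimensional real normed vector spaces, a : V × V → ℝ a symmetric bilinear form with a(v,v) ≥ 0 for all v ∈ V, and b : V × Q → ℝ a bilinear form. For v ∈ V define S(v) := sup over nonzero q ∈ Q of |b(v,q)|/‖q‖_Q, and define ‖v‖_{V_Q} := (a(v,v) + S(v)²)^{1/2}. Assume that ‖v‖_{V_Q} = 0 implies v = 0 (so ‖·‖_{V_Q} is a norm on V), and assume there is β > 0 such that for every q ∈ Q, sup over nonzero v ∈ V of b(v,q)/‖v‖_{V_Q} is at least β·‖q‖_Q. Then for every linear functional g on V there exists a unique pair (v,p) ∈ V × Q such that a(v,φ) + b(φ,p) = g(φ) for all φ ∈ V and b(v,q) = 0 for all q ∈ Q; moreover ‖v‖_{V_Q} ≤ ‖g‖_* and ‖p‖_Q ≤ (2/β)·‖g‖_*, where ‖g‖_* := sup over nonzero φ ∈ V of |g(φ)|/‖φ‖_{V_Q}. -/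

import Mathlib

/-!
The form `(v, p) ↦ a v · + b · p + b v ·` maps `V × Q` to its dual, so in finite dimensions
existence follows from uniqueness, and uniqueness is the stability estimate for `g = 0`.
For stability, `‖·‖_{V_Q}` is built so that `a` is coercive with constant `1` on the kernel of
`b` (there `S = 0`), while `|a u v| ≤ ‖u‖_{V_Q} ‖v‖_{V_Q}` by Cauchy–Schwarz and
`|b v q| ≤ ‖v‖_{V_Q} ‖q‖`. Testing the first equation with `v` bounds `v`; solving it for
`b · p` and applying the inf-sup condition bounds `p`. The supremum defining `‖g‖_*` is finite
because the equation itself gives `|g φ| ≤ (‖v‖_{V_Q} + ‖p‖) ‖φ‖_{V_Q}`.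
-/

noncomputable def dualNorm {E : Type*} [AddCommGroup E] [Module ℝ E] (N : E → ℝ)
    (f : E →ₗ[ℝ] ℝ) : ℝ :=
  ⨆ x : {x : E // x ≠ 0}, |f x.1| / N x.1

section DualNorm

variable {E : Type*} [AddCommGroup E] [Module ℝ E] {N : E → ℝ} {f : E →ₗ[ℝ] ℝ}

theorem dualNorm_nonneg (hN : ∀ x, 0 ≤ N x) : 0 ≤ dualNorm N f :=
  Real.iSup_nonneg fun x => div_nonneg (abs_nonneg _) (hN x)

@[simp]
theorem dualNorm_zero : dualNorm N 0 = 0 := by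
  simp [dualNorm]

theorem abs_apply_le_dualNorm_mul (hN : ∀ x, 0 ≤ N x) (hNpos : ∀ x ≠ 0, 0 < N x) {C : ℝ}
    (hC : ∀ x, |f x| ≤ C * N x) (x : E) : |f x| ≤ dualNorm N f * N x := by
  rcases eq_or_ne x 0 with rfl | hx
  · simpa using mul_nonneg (dualNorm_nonneg (f := f) hN) (hN 0)
  have hbdd : BddAbove (Set.range fun y : {y : E // y ≠ 0} => |f y.1| / N y.1) :=
    ⟨C, Set.forall_mem_range.2 fun y => (div_le_iff₀ (hNpos _ y.2)).2 (hC y.1)⟩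
  exact (div_le_iff₀ (hNpos x hx)).1 (le_ciSup hbdd ⟨x, hx⟩)

end DualNorm

theorem LinearMap.BilinForm.abs_apply_le_mul_of_apply_self_le_sq {V : Type*} [AddCommGroup V]
    [Module ℝ V] {a : LinearMap.BilinForm ℝ V} (hsymm : ∀ u v, a u v = a v u)
    (hpos : ∀ v, 0 ≤ a v v) {N : V → ℝ} (hN : ∀ v, 0 ≤ N v) (haN : ∀ v, a v v ≤ N v ^ 2)
    (u v : V) : |a u v| ≤ N u * N v := by
  refine abs_le_of_sq_le_sq ?_ (mul_nonneg (hN u) (hN v))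
  calc a u v ^ 2 = a u v * a v u := by rw [sq, hsymm v u]
    _ ≤ a u u * a v v := a.apply_mul_apply_le_of_forall_zero_le hpos u v
    _ ≤ N u ^ 2 * N v ^ 2 := mul_le_mul (haN u) (haN v) (hpos v) (sq_nonneg _)
    _ = (N u * N v) ^ 2 := by ring

section SaddlePoint

variable {K V Q : Type*}

def IsSaddlePointSolution [CommRing K] [AddCommGroup V] [Module K V] [AddCommGroup Q]
    [Module K Q] (a : V →ₗ[K] V →ₗ[K] K) (b : V →ₗ[K] Q →ₗ[K] K) (g : V →ₗ[K] K)
    (x : V × Q) : Prop :=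
  (∀ φ, a x.1 φ + b φ x.2 = g φ) ∧ ∀ q, b x.1 q = 0

section Algebra

variable [AddCommGroup V] [AddCommGroup Q]

section CommRing

variable [CommRing K] [Module K V] [Module K Q] (a : V →ₗ[K] V →ₗ[K] K) (b : V →ₗ[K] Q →ₗ[K] K)

def saddleForm : V × Q →ₗ[K] V × Q →ₗ[K] K :=
  a.compl₁₂ (.fst K V Q) (.fst K V Q) + (b.compl₁₂ (.fst K V Q) (.snd K V Q)).flip +
    b.compl₁₂ (.fst K V Q) (.snd K V Q)

@[simp]
theorem saddleForm_apply (x y : V × Q) : saddleForm a b x y = a x.1 y.1 + b y.1 x.2 + b x.1 y.2 :=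
  rfl

theorem saddleForm_eq_comp_fst_iff (g : V →ₗ[K] K) (x : V × Q) :
    saddleForm a b x = g ∘ₗ .fst K V Q ↔ IsSaddlePointSolution a b g x := by
  constructor
  · intro h
    constructor
    · intro φ
      simpa using LinearMap.congr_fun h (φ, 0)
    · intro q
      simpa using LinearMap.congr_fun h (0, q)
  · rintro ⟨hφ, hq⟩
    refine LinearMap.ext fun y => ?_
    simp [hφ, hq]

end CommRing

variable [Field K] [Module K V] [Module K Q] (a : V →ₗ[K] V →ₗ[K] K) (b : V →ₗ[K] Q →ₗ[K] K)

theorem existsUnique_isSaddlePointSolution [FiniteDimensional K V] [FiniteDimensional K Q]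
    (huniq : ∀ x, IsSaddlePointSolution a b 0 x → x = 0) (g : V →ₗ[K] K) :
    ∃! x, IsSaddlePointSolution a b g x := by
  have hinj : Function.Injective (saddleForm a b) := by
    refine (injective_iff_map_eq_zero _).2 fun x hx => huniq x ?_
    rw [← saddleForm_eq_comp_fst_iff, hx, LinearMap.zero_comp]
  have hsurj : Function.Surjective (saddleForm a b) :=
    (LinearMap.injective_iff_surjective_of_finrank_eq_finrank Subspace.dual_finrank_eq.symm).1 hinj
  simpa only [saddleForm_eq_comp_fst_iff] using
    (Function.Bijective.existsUnique ⟨hinj, hsurj⟩ (g ∘ₗ .fst K V Q))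

end Algebra

namespace IsSaddlePointSolution

variable [AddCommGroup V] [Module ℝ V] [SeminormedAddCommGroup Q] [Module ℝ Q]
  {a : V →ₗ[ℝ] V →ₗ[ℝ] ℝ} {b : V →ₗ[ℝ] Q →ₗ[ℝ] ℝ} {g : V →ₗ[ℝ] ℝ} {x : V × Q}
  {N : V → ℝ} {gs : ℝ}

theorem abs_apply_le (hx : IsSaddlePointSolution a b g x) (hCS : ∀ u v, |a u v| ≤ N u * N v)
    (hbN : ∀ φ q, |b φ q| ≤ N φ * ‖q‖) (φ : V) : |g φ| ≤ (N x.1 + ‖x.2‖) * N φ :=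
  calc |g φ| = |a x.1 φ + b φ x.2| := by rw [hx.1]
    _ ≤ |a x.1 φ| + |b φ x.2| := abs_add_le _ _
    _ ≤ N x.1 * N φ + N φ * ‖x.2‖ := add_le_add (hCS _ _) (hbN _ _)
    _ = (N x.1 + ‖x.2‖) * N φ := by ring

theorem apply_fst_le (hx : IsSaddlePointSolution a b g x)
    (hker : ∀ v, (∀ q, b v q = 0) → N v ^ 2 = a v v) (hgs : 0 ≤ gs)
    (hg : ∀ φ, |g φ| ≤ gs * N φ) : N x.1 ≤ gs := by
  have hsq : N x.1 ^ 2 ≤ gs * N x.1 :=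
    calc N x.1 ^ 2 = a x.1 x.1 := hker _ hx.2
      _ = g x.1 := by simpa [hx.2 x.2] using hx.1 x.1
      _ ≤ gs * N x.1 := (le_abs_self _).trans (hg _)
  nlinarith

theorem norm_snd_le (hx : IsSaddlePointSolution a b g x) (hCS : ∀ u v, |a u v| ≤ N u * N v)
    (hN : ∀ v, 0 ≤ N v) (hg : ∀ φ, |g φ| ≤ gs * N φ) (hfst : N x.1 ≤ gs) {β : ℝ} (hβ : 0 < β)
    (hinfsup : ∀ q, β * ‖q‖ ≤ ⨆ v : {v : V // v ≠ 0}, b v.1 q / N v.1) :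
    ‖x.2‖ ≤ 2 / β * gs := by
  have hgs : 0 ≤ gs := (hN _).trans hfst
  have hb : ∀ φ, b φ x.2 ≤ 2 * gs * N φ := fun φ =>
    calc b φ x.2 = g φ - a x.1 φ := by rw [← hx.1 φ]; ring
      _ ≤ |g φ| + |a x.1 φ| := by linarith [le_abs_self (g φ), neg_abs_le (a x.1 φ)]
      _ ≤ gs * N φ + N x.1 * N φ := add_le_add (hg φ) (hCS _ _)
      _ ≤ 2 * gs * N φ := by nlinarith [hN φ]
  have hsup : (⨆ v : {v : V // v ≠ 0}, b v.1 x.2 / N v.1) ≤ 2 * gs :=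
    Real.iSup_le (fun v => div_le_of_le_mul₀ (hN _) (by positivity) (hb v.1)) (by positivity)
  rw [div_mul_eq_mul_div, le_div_iff₀ hβ]
  linarith [hinfsup x.2]

end IsSaddlePointSolution

end SaddlePoint

section NormVQ

variable {V Q : Type*} [AddCommGroup V] [Module ℝ V] [NormedAddCommGroup Q] [NormedSpace ℝ Q]
  {a : V →ₗ[ℝ] V →ₗ[ℝ] ℝ} {b : V →ₗ[ℝ] Q →ₗ[ℝ] ℝ}

variable (a b) in
noncomputable def normVQ (v : V) : ℝ :=
  √(a v v + dualNorm norm (b v) ^ 2)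

theorem normVQ_nonneg (v : V) : 0 ≤ normVQ a b v :=
  Real.sqrt_nonneg _

theorem sq_normVQ (ha : ∀ v, 0 ≤ a v v) (v : V) :
    normVQ a b v ^ 2 = a v v + dualNorm norm (b v) ^ 2 :=
  Real.sq_sqrt (add_nonneg (ha v) (sq_nonneg _))

theorem sq_normVQ_of_forall_eq_zero (ha : ∀ v, 0 ≤ a v v) {v : V} (hv : ∀ q, b v q = 0) :
    normVQ a b v ^ 2 = a v v := by
  rw [sq_normVQ ha, show b v = 0 from LinearMap.ext hv, dualNorm_zero]
  ring

theorem abs_apply_le_normVQ_mul_normVQ (hsymm : ∀ u v, a u v = a v u) (ha : ∀ v, 0 ≤ a v v)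
    (u v : V) : |a u v| ≤ normVQ a b u * normVQ a b v :=
  LinearMap.BilinForm.abs_apply_le_mul_of_apply_self_le_sq hsymm ha normVQ_nonneg
    (fun v => by nlinarith [sq_normVQ (b := b) ha v]) u v

theorem dualNorm_le_normVQ (ha : ∀ v, 0 ≤ a v v) (v : V) : dualNorm norm (b v) ≤ normVQ a b v :=
  (pow_le_pow_iff_left₀ (dualNorm_nonneg norm_nonneg) (normVQ_nonneg v) two_ne_zero).1
    (by linarith [sq_normVQ (b := b) ha v, ha v])

theorem abs_apply_le_normVQ_mul_norm [FiniteDimensional ℝ Q] (ha : ∀ v, 0 ≤ a v v) (v : V)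
    (q : Q) : |b v q| ≤ normVQ a b v * ‖q‖ :=
  (abs_apply_le_dualNorm_mul norm_nonneg (fun _ => norm_pos_iff.2)
      (LinearMap.toContinuousLinearMap (b v)).le_opNorm q).trans
    (mul_le_mul_of_nonneg_right (dualNorm_le_normVQ ha v) (norm_nonneg q))

end NormVQ

/-- Abstract content of Theorem 3.3 of the paper: well-posedness of the
finite element saddle-point problem when the velocity space carries the
pressure-dependent norm `‖v‖_{V_Q}² = a(v,v) + S(v)²` with
`S(v) = sup_{q ≠ 0} |b(v,q)|/‖q‖`. -/
theorem wellposed_newnorm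
    {V Q : Type*}
    [NormedAddCommGroup V] [NormedSpace ℝ V] [FiniteDimensional ℝ V]
    [NormedAddCommGroup Q] [NormedSpace ℝ Q] [FiniteDimensional ℝ Q]
    (a : V →ₗ[ℝ] V →ₗ[ℝ] ℝ) (b : V →ₗ[ℝ] Q →ₗ[ℝ] ℝ)
    (ha_symm : ∀ u v : V, a u v = a v u)
    (ha_pos : ∀ v : V, 0 ≤ a v v)
    (S N : V → ℝ)
    (hS : ∀ v : V, S v = ⨆ q : {q : Q // q ≠ 0}, |b v q.1| / ‖q.1‖)
    (hN : ∀ v : V, N v = Real.sqrt (a v v + S v ^ 2))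
    (hNdef : ∀ v : V, N v = 0 → v = 0)
    (β : ℝ) (hβ : 0 < β)
    (hinfsup : ∀ q : Q, β * ‖q‖ ≤ ⨆ v : {v : V // v ≠ 0}, b v.1 q / N v.1) :
    ∀ g : V →ₗ[ℝ] ℝ, ∀ gs : ℝ,
      gs = (⨆ φ : {φ : V // φ ≠ 0}, |g φ.1| / N φ.1) →
      (∃! vp : V × Q,
        (∀ φ : V, a vp.1 φ + b φ vp.2 = g φ) ∧ (∀ q : Q, b vp.1 q = 0)) ∧
      (∀ vp : V × Q,
        ((∀ φ : V, a vp.1 φ + b φ vp.2 = g φ) ∧ (∀ q : Q, b vp.1 q = 0)) →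
          N vp.1 ≤ gs ∧ ‖vp.2‖ ≤ (2 / β) * gs) := by
  intro g gs hgs
  obtain rfl : N = normVQ a b := funext fun v => by rw [hN, hS]; rfl
  have hNpos : ∀ v ≠ 0, 0 < normVQ a b v := fun v hv =>
    (normVQ_nonneg v).lt_of_ne' (mt (hNdef v) hv)
  have hCS := abs_apply_le_normVQ_mul_normVQ (b := b) ha_symm ha_pos
  have hker : ∀ v, (∀ q, b v q = 0) → normVQ a b v ^ 2 = a v v := fun _ =>
    sq_normVQ_of_forall_eq_zero ha_pos
  have huniq : ∀ x, IsSaddlePointSolution a b 0 x → x = 0 := fun x hx => by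
    have hfst := hx.apply_fst_le hker le_rfl (gs := 0) (by simp)
    have hsnd := hx.norm_snd_le hCS normVQ_nonneg (by simp) hfst hβ hinfsup
    exact Prod.ext (hNdef _ (hfst.antisymm (normVQ_nonneg _)))
      (norm_le_zero_iff.1 (by simpa using hsnd))
  refine ⟨existsUnique_isSaddlePointSolution a b huniq g,
    fun x (hx : IsSaddlePointSolution a b g x) => ?_⟩
  replace hgs : gs = dualNorm (normVQ a b) g := hgs
  have hg : ∀ φ, |g φ| ≤ gs * normVQ a b φ := hgs ▸ abs_apply_le_dualNorm_mul normVQ_nonneg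
    hNpos (hx.abs_apply_le hCS (abs_apply_le_normVQ_mul_norm ha_pos))
  have hfst := hx.apply_fst_le hker (hgs ▸ dualNorm_nonneg normVQ_nonneg) hg
  exact ⟨hfst, hx.norm_snd_le hCS normVQ_nonneg hg hfst hβ hinfsup⟩
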